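/- arXiv:1907.11823 — 3 statements merged into one kernel-verified Lean document; each statement's English description precedes it below -/
import Mathlib

section
/- Let λ > 0 and C > 0, let y : ℝ → ℝ be differentiable on [0, ∞) with y(t) ≥ 0 for all t ≥ 0, and let h : ℝ → ℝ be continuous on [0, ∞) with h(t) ≥ 0 for all t ≥ 0. Assume that y'(t) + λ y(t) ≤ h(t) for all t > 0 and that ∫₀^∞ h(s) ds ≤ C. Then y(t) → 0 as t → ∞. -/
open MeasureTheory Filter

lemma key_decay (lam : ℝ) (hlam : 0 < lam) (y y' h : ℝ → ℝ)
    (hy : ∀ t ∈ Set.Ici (0 : ℝ), HasDerivAt y (y' t) t)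
    (hh : ContinuousOn h (Set.Ici (0 : ℝ)))
    (hh0 : ∀ t ∈ Set.Ici (0 : ℝ), 0 ≤ h t)
    (hineq : ∀ t > (0 : ℝ), y' t + lam * y t ≤ h t)
    (hhint : IntegrableOn h (Set.Ioi (0 : ℝ)))
    {a t : ℝ} (ha : 0 < a) (hat : a ≤ t) :
    y t ≤ Real.exp (lam * a - lam * t) * y a + ∫ s in Set.Ioi a, h s := by
  have hcontAt : ∀ x : ℝ, 0 < x → ContinuousAt h x := fun x hx =>
    hh.continuousAt (Ici_mem_nhds hx)
  set k : ℝ → ℝ := fun s => Real.exp (lam * s) * h s with hkdef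
  have hkcontOn : ContinuousOn k (Set.Ici (0 : ℝ)) :=
    ((Real.continuous_exp.comp (continuous_const.mul continuous_id)).continuousOn).mul hh
  have hsub : ∀ x : ℝ, a ≤ x → Set.uIcc a x ⊆ Set.Ici (0 : ℝ) := by
    intro x hx z hz
    rw [Set.uIcc_of_le hx] at hz
    exact le_trans ha.le hz.1
  have hkint : ∀ x : ℝ, a ≤ x → IntervalIntegrable k volume a x := fun x hx =>
    (hkcontOn.mono (hsub x hx)).intervalIntegrable
  set φ : ℝ → ℝ := fun x => ∫ s in a..x, k s with hφdef
  set g : ℝ → ℝ := fun x => Real.exp (lam * x) * y x with hgdef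
  set F : ℝ → ℝ := fun x => φ x - g x with hFdef
  have hφder : ∀ x : ℝ, a ≤ x → HasDerivAt φ (k x) x := by
    intro x hx
    have hx0 : 0 < x := lt_of_lt_of_le ha hx
    have hmeas : StronglyMeasurableAtFilter k (nhds x) volume :=
      (hkcontOn.mono (Set.Ioi_subset_Ici_self)).stronglyMeasurableAtFilter isOpen_Ioi x hx0
    have hcont : ContinuousAt k x :=
      ((Real.continuous_exp.comp (continuous_const.mul continuous_id)).continuousAt).mul
        (hcontAt x hx0)
    exact intervalIntegral.integral_hasDerivAt_right (hkint x hx) hmeas hcont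
  have hgder : ∀ x : ℝ, 0 ≤ x →
      HasDerivAt g (Real.exp (lam * x) * (y' x + lam * y x)) x := by
    intro x hx
    have he : HasDerivAt (fun u : ℝ => Real.exp (lam * u)) (Real.exp (lam * x) * lam) x := by
      simpa using ((hasDerivAt_id x).const_mul lam).exp
    have : HasDerivAt (fun u => Real.exp (lam * u) * y u) _ x := he.mul (hy x hx)
    convert this using 1
    ring
  have hFder : ∀ x : ℝ, a ≤ x →
      HasDerivAt F (Real.exp (lam * x) * (h x - (y' x + lam * y x))) x := by
    intro x hx
    have hx0 : (0:ℝ) ≤ x := le_trans ha.le hx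
    have : HasDerivAt (fun u => φ u - g u) _ x := (hφder x hx).sub (hgder x hx0)
    convert this using 1
    simp [hkdef]
    ring
  have hFmono : MonotoneOn F (Set.Ici a) := by
    apply monotoneOn_of_deriv_nonneg (convex_Ici a)
    · exact fun x hx => ((hFder x hx).differentiableAt.continuousAt).continuousWithinAt
    · rw [interior_Ici]
      exact fun x hx => (hFder x (le_of_lt hx)).differentiableAt.differentiableWithinAt
    · rw [interior_Ici]
      intro x hx
      rw [(hFder x (le_of_lt hx)).deriv]
      have hx0 : 0 < x := lt_of_le_of_lt ha.le hx
      exact mul_nonneg (Real.exp_pos _).le (sub_nonneg.2 (hineq x hx0))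
  have hFat : F a ≤ F t := hFmono (Set.self_mem_Ici) hat hat
  have hFa : F a = -g a := by simp [hFdef, hφdef, intervalIntegral.integral_same]
  have hgt : g t ≤ g a + φ t := by
    have : -g a ≤ φ t - g t := hFa ▸ hFat
    linarith
  -- bound φ t
  have hhintAT : IntervalIntegrable h volume a t :=
    ((hh.mono (fun z hz => le_trans ha.le ((Set.uIcc_of_le hat ▸ hz).1))).intervalIntegrable)
  have hφbound : φ t ≤ Real.exp (lam * t) * ∫ s in Set.Ioi a, h s := by
    have step1 : φ t ≤ ∫ s in a..t, Real.exp (lam * t) * h s := by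
      apply intervalIntegral.integral_mono_on hat (hkint t hat) (hhintAT.const_mul _)
      intro s hs
      have h0s : (0:ℝ) ≤ s := le_trans ha.le hs.1
      exact mul_le_mul_of_nonneg_right
        (Real.exp_le_exp.2 (mul_le_mul_of_nonneg_left hs.2 hlam.le)) (hh0 s h0s)
    have step2 : (∫ s in a..t, Real.exp (lam * t) * h s)
        = Real.exp (lam * t) * ∫ s in a..t, h s := by
      rw [intervalIntegral.integral_const_mul]
    have hIoiInt : IntegrableOn h (Set.Ioi a) :=
      hhint.mono_set (Set.Ioi_subset_Ioi ha.le)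
    have hae : 0 ≤ᵐ[volume.restrict (Set.Ioi a)] h := by
      refine (ae_restrict_iff' measurableSet_Ioi).2 (ae_of_all _ fun x hx => ?_)
      exact hh0 x (le_trans ha.le (le_of_lt hx))
    have step3 : (∫ s in a..t, h s) ≤ ∫ s in Set.Ioi a, h s := by
      rw [intervalIntegral.integral_of_le hat]
      exact setIntegral_mono_set hIoiInt hae (HasSubset.Subset.eventuallyLE Set.Ioc_subset_Ioi_self)
    calc φ t ≤ Real.exp (lam * t) * ∫ s in a..t, h s := step2 ▸ step1
      _ ≤ Real.exp (lam * t) * ∫ s in Set.Ioi a, h s :=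
          mul_le_mul_of_nonneg_left step3 (Real.exp_pos _).le
  set T := ∫ s in Set.Ioi a, h s with hT
  have hgT : g t ≤ g a + Real.exp (lam * t) * T := le_trans hgt (by linarith)
  have hmul := mul_le_mul_of_nonneg_left hgT (Real.exp_pos (-(lam * t))).le
  have hyid : Real.exp (-(lam * t)) * g t = y t := by
    rw [hgdef]
    rw [← mul_assoc, ← Real.exp_add]
    norm_num
  have hexpand : Real.exp (-(lam * t)) * (g a + Real.exp (lam * t) * T)
      = Real.exp (lam * a - lam * t) * y a + T := by
    rw [hgdef]
    have e1 : -(lam * t) + lam * a = lam * a - lam * t := by ring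
    have e2 : -(lam * t) + lam * t = 0 := by ring
    rw [mul_add, ← mul_assoc, ← Real.exp_add, e1, ← mul_assoc, ← Real.exp_add, e2,
      Real.exp_zero, one_mul]
  rw [hyid, hexpand] at hmul
  exact hmul

/-- ODE-comparison decay lemma: if `y ≥ 0` is differentiable on `[0,∞)`, `h ≥ 0` is
continuous on `[0,∞)`, `y' + λ y ≤ h` on `(0,∞)` and `∫₀^∞ h ≤ C`, then `y(t) → 0`. -/
theorem stmt_2 (lam C : ℝ) (hlam : 0 < lam) (hC : 0 < C)
    (y y' h : ℝ → ℝ)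
    (hy : ∀ t ∈ Set.Ici (0 : ℝ), HasDerivAt y (y' t) t)
    (hy0 : ∀ t ∈ Set.Ici (0 : ℝ), 0 ≤ y t)
    (hh : ContinuousOn h (Set.Ici (0 : ℝ)))
    (hh0 : ∀ t ∈ Set.Ici (0 : ℝ), 0 ≤ h t)
    (hineq : ∀ t > (0 : ℝ), y' t + lam * y t ≤ h t)
    (hhint : IntegrableOn h (Set.Ioi (0 : ℝ)))
    (hintC : (∫ s in Set.Ioi (0 : ℝ), h s) ≤ C) :
    Tendsto y atTop (nhds 0) := by
  rw [Metric.tendsto_atTop]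
  intro ε hε
  set I := ∫ s in Set.Ioi (0:ℝ), h s with hI
  have hconv : Tendsto (fun b : ℝ => ∫ s in (0:ℝ)..b, h s) atTop (nhds I) :=
    MeasureTheory.intervalIntegral_tendsto_integral_Ioi 0 hhint tendsto_id
  have h1 : ∀ᶠ b in atTop, I - ε/2 < ∫ s in (0:ℝ)..b, h s :=
    hconv.eventually (eventually_gt_nhds (by linarith))
  obtain ⟨a, ha1, hatail⟩ : ∃ a : ℝ, 1 ≤ a ∧ I - ε/2 < ∫ s in (0:ℝ)..a, h s := by
    obtain ⟨N, hN⟩ := ((eventually_ge_atTop (1:ℝ)).and h1).exists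
    exact ⟨N, hN.1, hN.2⟩
  have ha0 : (0:ℝ) < a := lt_of_lt_of_le one_pos ha1
  have hsplit : I = (∫ s in Set.Ioc 0 a, h s) + ∫ s in Set.Ioi a, h s := by
    rw [hI, ← MeasureTheory.setIntegral_union (Set.Ioc_disjoint_Ioi le_rfl)
      measurableSet_Ioi (hhint.mono_set Set.Ioc_subset_Ioi_self)
      (hhint.mono_set (Set.Ioi_subset_Ioi ha0.le)), Set.Ioc_union_Ioi_eq_Ioi ha0.le]
  have hioc : (∫ s in (0:ℝ)..a, h s) = ∫ s in Set.Ioc 0 a, h s :=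
    intervalIntegral.integral_of_le ha0.le
  have htail : (∫ s in Set.Ioi a, h s) < ε/2 := by
    rw [hioc] at hatail
    linarith
  have hdecay : Tendsto (fun t : ℝ => Real.exp (lam * a - lam * t) * y a) atTop (nhds 0) := by
    have hA : Tendsto (fun t : ℝ => lam * t) atTop atTop :=
      Tendsto.const_mul_atTop hlam tendsto_id
    have hB : Tendsto (fun t : ℝ => -(lam * t)) atTop atBot :=
      tendsto_neg_atTop_atBot.comp hA
    have hCt : Tendsto (fun t : ℝ => lam * a - lam * t) atTop atBot := by
      simpa [sub_eq_add_neg] using tendsto_atBot_add_const_left atTop (lam * a) hB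
    have := (Real.tendsto_exp_atBot.comp hCt).mul_const (y a)
    simpa using this
  have h2 : ∀ᶠ t in atTop, Real.exp (lam * a - lam * t) * y a < ε/2 :=
    hdecay.eventually (eventually_lt_nhds (by linarith : (0:ℝ) < ε/2))
  obtain ⟨N, hN⟩ := eventually_atTop.1 (h2.and (eventually_ge_atTop a))
  refine ⟨N, fun t ht => ?_⟩
  obtain ⟨hlt, hta⟩ := hN t ht
  have ht0 : (0:ℝ) ≤ t := le_trans ha0.le hta
  have hyt := key_decay lam hlam y y' h hy hh hh0 hineq hhint ha0 hta
  rw [Real.dist_eq, sub_zero, abs_of_nonneg (hy0 t ht0)]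
  linarith
end

section
/- Let λ > 0, let y : ℝ → ℝ be differentiable on [0, ∞) with y(t) ≥ 0 for all t ≥ 0, and let h : ℝ → ℝ be continuous on [0, ∞) with h(t) ≥ 0 for all t ≥ 0. Assume that y'(t) + λ y(t) ≤ h(t) for all t > 0 and that ∫_t^{t+1} h(s) ds → 0 as t → ∞. Then y(t) → 0 as t → ∞. -/
open MeasureTheory Filter

/-- One-step comparison: `y (s+1) ≤ e^{-lam} y s + ∫_s^{s+1} h`. -/
lemma stmt_3_step (lam : ℝ) (hlam : 0 < lam)
    (y y' h : ℝ → ℝ)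
    (hy : ∀ t ∈ Set.Ici (0 : ℝ), HasDerivAt y (y' t) t)
    (hh : ContinuousOn h (Set.Ici (0 : ℝ)))
    (hh0 : ∀ t ∈ Set.Ici (0 : ℝ), 0 ≤ h t)
    (hineq : ∀ t > (0 : ℝ), y' t + lam * y t ≤ h t)
    (s : ℝ) (hs : 0 ≤ s) :
    y (s + 1) ≤ Real.exp (-lam) * y s + ∫ v in s..(s + 1), h v := by
  set f : ℝ → ℝ := fun v => Real.exp (lam * v) * h v with hf_def
  have hexp_cont : Continuous fun v : ℝ => Real.exp (lam * v) :=
    Real.continuous_exp.comp (continuous_const.mul continuous_id)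
  have hf_cont : ContinuousOn f (Set.Ici (0 : ℝ)) := hexp_cont.continuousOn.mul hh
  have hIcc : Set.Icc s (s + 1) ⊆ Set.Ici (0 : ℝ) := fun x hx => le_trans hs hx.1
  have hs1 : s ≤ s + 1 := by linarith
  have hf_int : IntervalIntegrable f volume s (s + 1) :=
    (hf_cont.mono hIcc).intervalIntegrable_of_Icc hs1
  have hh_int : IntervalIntegrable h volume s (s + 1) :=
    (hh.mono hIcc).intervalIntegrable_of_Icc hs1
  set w : ℝ → ℝ := fun u => Real.exp (lam * u) * y u - ∫ v in s..u, f v with hw_def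
  have hy_cont : ContinuousOn y (Set.Ici (0 : ℝ)) :=
    fun t ht => (hy t ht).continuousAt.continuousWithinAt
  have hprim_cont : ContinuousOn (fun u => ∫ v in s..u, f v) (Set.Icc s (s + 1)) := by
    have := intervalIntegral.continuousOn_primitive_interval
      (f := f) (μ := volume) (a := s) (b := s + 1)
      (by rw [Set.uIcc_of_le hs1]
          exact (hf_cont.mono hIcc).integrableOn_compact isCompact_Icc)
    rwa [Set.uIcc_of_le hs1] at this
  have hw_cont : ContinuousOn w (Set.Icc s (s + 1)) :=
    ((hexp_cont.continuousOn).mul (hy_cont.mono hIcc)).sub hprim_cont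
  -- derivative of w on the interior
  have hw_deriv : ∀ u ∈ Set.Ioo s (s + 1),
      HasDerivAt w (Real.exp (lam * u) * y' u + lam * Real.exp (lam * u) * y u
        - f u) u := by
    intro u hu
    have hu0 : 0 < u := lt_of_le_of_lt hs hu.1
    have hyd := hy u (le_of_lt hu0)
    have hed : HasDerivAt (fun v : ℝ => Real.exp (lam * v)) (lam * Real.exp (lam * u)) u := by
      have := (Real.hasDerivAt_exp (lam * u)).comp u ((hasDerivAt_id u).const_mul lam)
      exact this.congr_deriv (by ring)
    have hfi : IntervalIntegrable f volume s u :=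
      (hf_cont.mono (fun x hx => le_trans hs hx.1)).intervalIntegrable_of_Icc hu.1.le
    have hmeas : StronglyMeasurableAtFilter f (nhds u) volume :=
      ContinuousOn.stronglyMeasurableAtFilter (s := Set.Ioi (0:ℝ)) isOpen_Ioi
        (hf_cont.mono Set.Ioi_subset_Ici_self) u hu0
    have hca : ContinuousAt f u :=
      (hf_cont.mono Set.Ioi_subset_Ici_self).continuousAt (Ioi_mem_nhds hu0)
    have hprim : HasDerivAt (fun u => ∫ v in s..u, f v) (f u) u :=
      intervalIntegral.integral_hasDerivAt_right hfi hmeas hca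
    have := (hed.mul hyd).sub hprim
    exact this.congr_deriv (by ring)
  have hanti : AntitoneOn w (Set.Icc s (s + 1)) := by
    apply antitoneOn_of_deriv_nonpos (convex_Icc s (s + 1)) hw_cont
    · intro u hu
      rw [interior_Icc] at hu
      exact (hw_deriv u hu).differentiableAt.differentiableWithinAt
    · intro u hu
      rw [interior_Icc] at hu
      rw [(hw_deriv u hu).deriv]
      have hu0 : 0 < u := lt_of_le_of_lt hs hu.1
      have hle := hineq u hu0
      have hep : (0:ℝ) < Real.exp (lam * u) := Real.exp_pos _
      have : Real.exp (lam * u) * y' u + lam * Real.exp (lam * u) * y u - f u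
          = Real.exp (lam * u) * (y' u + lam * y u - h u) := by rw [hf_def]; ring
      rw [this]
      exact mul_nonpos_of_nonneg_of_nonpos hep.le (by linarith)
  have hws : w (s + 1) ≤ w s :=
    hanti (Set.left_mem_Icc.2 hs1) (Set.right_mem_Icc.2 hs1) hs1
  have hws' : Real.exp (lam * (s + 1)) * y (s + 1)
      ≤ Real.exp (lam * s) * y s + ∫ v in s..(s + 1), f v := by
    have h0 : (∫ v in s..s, f v) = 0 := intervalIntegral.integral_same
    simp only [hw_def, h0, sub_zero] at hws
    linarith
  -- bound the integral of f
  have hfb : (∫ v in s..(s + 1), f v)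
      ≤ Real.exp (lam * (s + 1)) * ∫ v in s..(s + 1), h v := by
    rw [← intervalIntegral.integral_const_mul]
    apply intervalIntegral.integral_mono_on hs1 hf_int
      (hh_int.const_mul _)
    intro x hx
    have hx0 : (0:ℝ) ≤ x := le_trans hs hx.1
    have hhx : 0 ≤ h x := hh0 x hx0
    have : Real.exp (lam * x) ≤ Real.exp (lam * (s + 1)) :=
      Real.exp_le_exp.2 (by nlinarith [hx.2])
    exact mul_le_mul_of_nonneg_right this hhx
  have hE : (0:ℝ) < Real.exp (lam * (s + 1)) := Real.exp_pos _
  have hkey : Real.exp (-lam) * Real.exp (lam * (s + 1)) = Real.exp (lam * s) := by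
    rw [← Real.exp_add]; ring_nf
  apply le_of_mul_le_mul_left _ hE
  calc Real.exp (lam * (s + 1)) * y (s + 1)
      ≤ Real.exp (lam * s) * y s + ∫ v in s..(s + 1), f v := hws'
    _ ≤ Real.exp (lam * s) * y s + Real.exp (lam * (s + 1)) * ∫ v in s..(s + 1), h v := by
        linarith
    _ = Real.exp (lam * (s + 1)) * (Real.exp (-lam) * y s + ∫ v in s..(s + 1), h v) := by
        rw [← hkey]; ring

/-- Variant of the ODE-comparison decay lemma: the forcing term `h` is only required to
have vanishing averages over unit time intervals. -/
theorem stmt_3 (lam : ℝ) (hlam : 0 < lam)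
    (y y' h : ℝ → ℝ)
    (hy : ∀ t ∈ Set.Ici (0 : ℝ), HasDerivAt y (y' t) t)
    (hy0 : ∀ t ∈ Set.Ici (0 : ℝ), 0 ≤ y t)
    (hh : ContinuousOn h (Set.Ici (0 : ℝ)))
    (hh0 : ∀ t ∈ Set.Ici (0 : ℝ), 0 ≤ h t)
    (hineq : ∀ t > (0 : ℝ), y' t + lam * y t ≤ h t)
    (hint : Tendsto (fun t : ℝ => ∫ s in t..(t + 1), h s) atTop (nhds 0)) :
    Tendsto y atTop (nhds 0) := by
  set q : ℝ := Real.exp (-lam) with hq_def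
  have hq0 : 0 < q := Real.exp_pos _
  have hq1 : q < 1 := Real.exp_lt_one_iff.2 (by linarith)
  set g : ℝ → ℝ := fun t => ∫ s in t..(t + 1), h s with hg_def
  have step : ∀ s ≥ (0:ℝ), y (s + 1) ≤ q * y s + g s :=
    fun s hs => stmt_3_step lam hlam y y' h hy hh hh0 hineq s hs
  rw [Metric.tendsto_atTop]
  intro ε hε
  -- choose ε' and T
  set ε' : ℝ := ε * (1 - q) / 2 with hε'_def
  have hε' : 0 < ε' := by
    apply div_pos (mul_pos hε (by linarith)) two_pos
  obtain ⟨T₀, hT₀⟩ := (Metric.tendsto_atTop.1 hint ε' hε')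
  set T : ℝ := max T₀ 0 with hT_def
  have hT0 : (0:ℝ) ≤ T := le_max_right _ _
  have hTg : ∀ s ≥ T, g s ≤ ε' := by
    intro s hsT
    have := hT₀ s (le_trans (le_max_left _ _) hsT)
    rw [Real.dist_eq, sub_zero] at this
    exact le_of_lt (lt_of_le_of_lt (le_abs_self _) this)
  -- the iterated bound
  set C : ℝ := ε' / (1 - q) with hC_def
  have hCε : C = ε / 2 := by
    have h1q : (0:ℝ) < 1 - q := by linarith
    rw [hC_def, hε'_def]
    field_simp
  have hC0 : 0 < C := by rw [hCε]; linarith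
  have hiter : ∀ t ≥ T, ∀ n : ℕ, y (t + n) ≤ q ^ n * y t + C := by
    intro t ht
    intro n
    induction n with
    | zero => simp; linarith [hC0]
    | succ n ih =>
      have htT : T ≤ t + n := le_trans ht (le_add_of_nonneg_right n.cast_nonneg)
      have htn0 : (0:ℝ) ≤ t + n := le_trans hT0 htT
      have h1 := step (t + n) htn0
      have h2 := hTg (t + n) htT
      have hys : y (t + n) ≤ q ^ n * y t + C := ih
      have hcast : t + ((n : ℝ) + 1) = (t + n) + 1 := by ring
      have hqC : q * C + ε' = C := by
        have h1q : (1 : ℝ) - q ≠ 0 := by linarith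
        have : ε' = C * (1 - q) := by
          rw [hC_def]; field_simp
        rw [this]; ring
      calc y (t + ((n:ℕ) + 1 : ℕ)) = y ((t + n) + 1) := by push_cast; ring_nf
        _ ≤ q * y (t + n) + g (t + n) := h1
        _ ≤ q * (q ^ n * y t + C) + ε' := by nlinarith
        _ = q ^ (n + 1) * y t + (q * C + ε') := by ring
        _ = q ^ (n + 1) * y t + C := by rw [hqC]
  -- bound y on [T, T+1]
  have hy_cont : ContinuousOn y (Set.Icc T (T + 1)) := by
    intro x hx
    exact ((hy x (le_trans hT0 hx.1)).continuousAt).continuousWithinAt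
  obtain ⟨M, hM⟩ := isCompact_Icc.exists_bound_of_continuousOn hy_cont
  have hM0 : (0:ℝ) ≤ M :=
    le_trans (norm_nonneg _) (hM T (Set.left_mem_Icc.2 (by linarith)))
  -- choose N with q^N * M < ε/2
  obtain ⟨N, hN⟩ : ∃ N : ℕ, q ^ N < (ε/2) / (M + 1) :=
    exists_pow_lt_of_lt_one (by positivity) hq1
  have hNM : q ^ N * M < ε / 2 := by
    have hq' : q ^ N * (M + 1) < ε / 2 := by
      rw [lt_div_iff₀ (by linarith : (0:ℝ) < M + 1)] at hN
      linarith
    nlinarith [pow_pos hq0 N]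
  refine ⟨T + N + 1, fun t htt => ?_⟩
  have ht0 : (0:ℝ) ≤ t := by
    have : (0:ℝ) ≤ (N:ℝ) := Nat.cast_nonneg _
    linarith
  have htT' : (0:ℝ) ≤ t - T := by
    have : (0:ℝ) ≤ (N:ℝ) := Nat.cast_nonneg _
    linarith
  set n : ℕ := ⌊t - T⌋₊ with hn_def
  have hn1 : (n:ℝ) ≤ t - T := Nat.floor_le htT'
  have hn2 : t - T < n + 1 := Nat.lt_floor_add_one _
  have hnN : N ≤ n := by
    apply Nat.le_floor
    push_cast
    linarith
  set s : ℝ := t - n with hs_def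
  have hsT : T ≤ s := by rw [hs_def]; linarith
  have hsT1 : s ≤ T + 1 := by rw [hs_def]; linarith
  have hs0 : (0:ℝ) ≤ s := le_trans hT0 hsT
  have hits := hiter s hsT n
  have hst : s + (n:ℝ) = t := by rw [hs_def]; ring
  rw [hst] at hits
  have hyM : y s ≤ M := le_trans (le_abs_self _) (hM s ⟨hsT, hsT1⟩)
  have hqn : q ^ n ≤ q ^ N := pow_le_pow_of_le_one hq0.le hq1.le hnN
  have hyt : y t ≤ q ^ N * M + C := by
    have h1 : q ^ n * y s ≤ q ^ N * M := by
      have hys0 : 0 ≤ y s := hy0 s hs0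
      have := mul_le_mul hqn hyM hys0 (pow_nonneg hq0.le N)
      linarith
    linarith
  rw [Real.dist_eq, sub_zero, abs_of_nonneg (hy0 t ht0)]
  calc y t ≤ q ^ N * M + C := hyt
    _ < ε / 2 + ε / 2 := by rw [hCε] at *; linarith
    _ = ε := by ring
end

section
/- Let f, g : ℝ → ℝ be nonnegative and nonincreasing on [0, ∞), and suppose there is a constant d ≥ 0 with f(t) − g(t) = d for all t ≥ 0. If ∫_{t−1}^{t} f(s) g(s) ds → 0 as t → ∞, then g(t) → 0 and f(t) → d as t → ∞. -/
open MeasureTheory Filter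

/-- If `f, g ≥ 0` are nonincreasing on `[0,∞)` with constant difference `f - g = d ≥ 0`,
and `∫_{t-1}^t f g → 0` as `t → ∞`, then `g(t) → 0` and `f(t) → d`. -/
theorem stmt_6 (f g : ℝ → ℝ) (d : ℝ) (hd : 0 ≤ d)
    (hfnn : ∀ t ∈ Set.Ici (0 : ℝ), 0 ≤ f t)
    (hgnn : ∀ t ∈ Set.Ici (0 : ℝ), 0 ≤ g t)
    (hfmono : AntitoneOn f (Set.Ici (0 : ℝ)))
    (hgmono : AntitoneOn g (Set.Ici (0 : ℝ)))
    (hdiff : ∀ t ∈ Set.Ici (0 : ℝ), f t - g t = d)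
    (hint : Tendsto (fun t : ℝ => ∫ s in (t - 1)..t, f s * g s) atTop (nhds 0)) :
    Tendsto g atTop (nhds 0) ∧ Tendsto f atTop (nhds d) := by
  have hfg : ∀ t : ℝ, 1 ≤ t → g t ^ 2 ≤ ∫ s in (t - 1)..t, f s * g s := by
    intro t ht
    have h01 : (0 : ℝ) ≤ t - 1 := by linarith
    have ht0 : t ∈ Set.Ici (0 : ℝ) := by simp; linarith
    have hsub : Set.uIcc (t - 1) t ⊆ Set.Ici (0 : ℝ) := by
      rw [Set.uIcc_of_le (by linarith)]
      intro x hx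
      exact le_trans h01 hx.1
    have hanti : AntitoneOn (fun s => f s * g s) (Set.uIcc (t - 1) t) := by
      intro a ha b hb hab
      have ha' := hsub ha
      have hb' := hsub hb
      exact mul_le_mul (hfmono ha' hb' hab) (hgmono ha' hb' hab) (hgnn b hb') (hfnn a ha')
    have hInt : IntervalIntegrable (fun s => f s * g s) volume (t - 1) t :=
      hanti.intervalIntegrable
    have hconst : IntervalIntegrable (fun _ : ℝ => g t ^ 2) volume (t - 1) t :=
      intervalIntegrable_const
    have hle : ∀ s ∈ Set.Icc (t - 1) t, g t ^ 2 ≤ f s * g s := by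
      intro s hs
      have hs0 : s ∈ Set.Ici (0 : ℝ) := le_trans h01 hs.1
      have h1 : g t ≤ f t := by have := hdiff t ht0; linarith
      have h2 : f t ≤ f s := hfmono hs0 ht0 hs.2
      have h3 : g t ≤ g s := hgmono hs0 ht0 hs.2
      have hgt0 : 0 ≤ g t := hgnn t ht0
      calc g t ^ 2 = g t * g t := sq (g t)
        _ ≤ f s * g s := mul_le_mul (le_trans h1 h2) h3 hgt0 (hfnn s hs0)
    calc g t ^ 2 = ∫ _ in (t - 1)..t, g t ^ 2 := by
          rw [intervalIntegral.integral_const]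
          simp
      _ ≤ ∫ s in (t - 1)..t, f s * g s :=
          intervalIntegral.integral_mono_on (by linarith) hconst hInt hle
  have hsq : Tendsto (fun t => g t ^ 2) atTop (nhds 0) := by
    refine tendsto_of_tendsto_of_tendsto_of_le_of_le' tendsto_const_nhds hint ?_ ?_
    · filter_upwards [eventually_ge_atTop (1 : ℝ)] with t ht
      exact sq_nonneg _
    · filter_upwards [eventually_ge_atTop (1 : ℝ)] with t ht
      exact hfg t ht
  have hg0 : Tendsto g atTop (nhds 0) := by
    have h1 : Tendsto (fun t => Real.sqrt (g t ^ 2)) atTop (nhds 0) := by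
      have := (Real.continuous_sqrt.tendsto 0).comp hsq
      simpa [Function.comp_def] using this
    refine h1.congr' ?_
    filter_upwards [eventually_ge_atTop (0 : ℝ)] with t ht
    rw [Real.sqrt_sq (hgnn t ht)]
  have hf : Tendsto f atTop (nhds d) := by
    have h2 : Tendsto (fun t => g t + d) atTop (nhds d) := by
      simpa using hg0.add tendsto_const_nhds
    refine h2.congr' ?_
    filter_upwards [eventually_ge_atTop (0 : ℝ)] with t ht
    have := hdiff t ht
    linarith
  exact ⟨hg0, hf⟩
end
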